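/- Decomposition of homogeneous k-monogenic polynomials: Let n ≥ 2, let k ≥ 1, and let p : ℝⁿ → Cl_n be a polynomial homogeneous of degree q ≥ 0 satisfying D^k p = 0. Then there exist left monogenic polynomials f₀,…,f_{k−1}, where each f_j is homogeneous of degree q−j whenever q−j ≥ 0 and is identically zero otherwise, such that p(x) = f₀(x) + x f₁(x) + … + x^{k−1} f_{k−1}(x) for all x ∈ ℝⁿ, the powers x^j being Clifford powers of the vector x and the products Clifford products. -/

import Mathlib

noncomputable section

open MeasureTheory
open scoped BoundedContinuousFunction

/-- Euclidean space `ℝⁿ`. -/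
abbrev Ev (n : ℕ) := EuclideanSpace ℝ (Fin n)

/-- The negative-definite quadratic form `x ↦ -‖x‖²` on `ℝⁿ`. -/
def Qn (n : ℕ) : QuadraticForm ℝ (Ev n) :=
  -(LinearMap.BilinMap.toQuadraticMap (innerₗ (F := Ev n)))

/-- The real Clifford algebra `Cl_n`, in which `e_i e_j + e_j e_i = -2 δ_{ij}` and
vectors `x ∈ ℝⁿ` satisfy `x² = -‖x‖²`. -/
abbrev Cl (n : ℕ) := CliffordAlgebra (Qn n)

/-- The embedding of vectors `ℝⁿ ⊆ Cl_n`. -/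
def toCl (n : ℕ) (x : Ev n) : Cl n := CliffordAlgebra.ι (Qn n) x

/-- The generators `e_i` of `Cl_n`. -/
def eCl (n : ℕ) (i : Fin n) : Cl n := toCl n (EuclideanSpace.single i 1)

/-! ### A norm on `Cl n`.
`Cl n` is finite dimensional, so all norms on it are equivalent and induce
the canonical topology; we fix one obtained from a linear embedding into a
space of bounded functions. -/

/-- Index type of a basis of `Cl n`. -/
def ClIdx (n : ℕ) : Type _ := Module.Basis.ofVectorSpaceIndex ℝ (Cl n)

instance (n : ℕ) : TopologicalSpace (ClIdx n) := ⊥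
instance (n : ℕ) : DiscreteTopology (ClIdx n) := ⟨rfl⟩

/-- Finitely supported functions embed into bounded continuous functions
(w.r.t. the discrete topology). -/
def finsuppToBCF (ι : Type*) [TopologicalSpace ι] [DiscreteTopology ι] :
    (ι →₀ ℝ) →ₗ[ℝ] (ι →ᵇ ℝ) where
  toFun f := BoundedContinuousFunction.ofNormedAddCommGroup f continuous_of_discreteTopology
    (∑ a ∈ f.support, ‖f a‖) (by
      intro x
      by_cases hx : x ∈ f.support
      · exact Finset.single_le_sum (fun a _ => norm_nonneg _) hx
      · rw [Finsupp.notMem_support_iff.mp hx]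
        simpa using Finset.sum_nonneg (fun a _ => norm_nonneg (f a)))
  map_add' f g := by ext i; simp
  map_smul' c f := by ext i; simp

lemma finsuppToBCF_injective (ι : Type*) [TopologicalSpace ι] [DiscreteTopology ι] :
    Function.Injective (finsuppToBCF ι) := by
  intro f g h
  ext i
  have := congrFun (congrArg DFunLike.coe h) i
  simpa [finsuppToBCF, BoundedContinuousFunction.coe_ofNormedAddCommGroup] using this

/-- A linear injection of `Cl n` into a normed space. -/
def clEmb (n : ℕ) : Cl n →ₗ[ℝ] (ClIdx n →ᵇ ℝ) :=
  (finsuppToBCF (ClIdx n)).comp (Module.Basis.ofVectorSpace ℝ (Cl n)).repr.toLinearMap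

lemma clEmb_injective (n : ℕ) : Function.Injective (clEmb n) :=
  (finsuppToBCF_injective (ClIdx n)).comp (Module.Basis.ofVectorSpace ℝ (Cl n)).repr.injective

instance (n : ℕ) : NormedAddCommGroup (Cl n) :=
  NormedAddCommGroup.induced (Cl n) (ClIdx n →ᵇ ℝ) (clEmb n) (clEmb_injective n)

instance (n : ℕ) : NormedSpace ℝ (Cl n) :=
  NormedSpace.induced ℝ (Cl n) (ClIdx n →ᵇ ℝ) (clEmb n)

/-! ### The Dirac operator -/

/-- The partial derivative `∂f/∂x_i` of a `Cl_n`-valued function. -/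
def pd (n : ℕ) (i : Fin n) (f : Ev n → Cl n) (x : Ev n) : Cl n :=
  fderiv ℝ f x (EuclideanSpace.single i 1)

/-- The Dirac operator `Df = Σᵢ eᵢ ∂f/∂xᵢ`. -/
def Dirac (n : ℕ) (f : Ev n → Cl n) : Ev n → Cl n :=
  fun x => ∑ i, eCl n i * pd n i f x

/-- The right Dirac operator `fD = Σᵢ (∂f/∂xᵢ) eᵢ`. -/
def DiracR (n : ℕ) (f : Ev n → Cl n) : Ev n → Cl n :=
  fun x => ∑ i, pd n i f x * eCl n i

/-- `f` is left monogenic (left Clifford holomorphic) on `U`: it is `C¹` with `Df = 0` there. -/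
def LeftMonogenicOn (n : ℕ) (f : Ev n → Cl n) (U : Set (Ev n)) : Prop :=
  ContDiffOn ℝ 1 f U ∧ ∀ x ∈ U, Dirac n f x = 0

/-- `g` is right monogenic on `U`: it is `C¹` with `gD = 0` there. -/
def RightMonogenicOn (n : ℕ) (g : Ev n → Cl n) (U : Set (Ev n)) : Prop :=
  ContDiffOn ℝ 1 g U ∧ ∀ x ∈ U, DiracR n g x = 0

/-- A `Cl_n`-valued polynomial map: a finite sum of real polynomials in the coordinates
times constant Clifford coefficients. -/
def IsPolyMap (n : ℕ) (P : Ev n → Cl n) : Prop :=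
  ∃ (N : ℕ) (p : Fin N → MvPolynomial (Fin n) ℝ) (c : Fin N → Cl n),
    ∀ x, P x = ∑ i, MvPolynomial.eval (fun j => x j) (p i) • c i

section Aux
open MvPolynomial

variable {n : ℕ}

lemma Qn_apply (x : Ev n) : Qn n x = -(inner ℝ x x : ℝ) := by
  simp [Qn, LinearMap.BilinMap.toQuadraticMap_apply]

lemma eCl_sq (i : Fin n) : eCl n i * eCl n i = algebraMap ℝ (Cl n) (-1) := by
  rw [eCl, toCl, CliffordAlgebra.ι_sq_scalar, Qn_apply]
  norm_num [EuclideanSpace.inner_single_left, EuclideanSpace.single_apply]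

lemma eCl_mul_toCl_add (i : Fin n) (x : Ev n) :
    eCl n i * toCl n x + toCl n x * eCl n i = algebraMap ℝ (Cl n) (-(2 * x i)) := by
  rw [eCl, toCl, toCl, CliffordAlgebra.ι_mul_ι_add_swap]
  congr 1
  have : QuadraticMap.polar (⇑(Qn n)) (EuclideanSpace.single i 1) x
      = -(QuadraticMap.polar
        (⇑(LinearMap.BilinMap.toQuadraticMap (innerₗ (F := Ev n))))
        (EuclideanSpace.single i 1) x) := by
    rw [Qn]
    rw [show ⇑(-(LinearMap.BilinMap.toQuadraticMap (innerₗ (F := Ev n))))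
      = -(⇑(LinearMap.BilinMap.toQuadraticMap (innerₗ (F := Ev n)))) from rfl]
    rw [QuadraticMap.polar_neg]
  rw [this, LinearMap.BilinMap.polar_toQuadraticMap]
  simp [EuclideanSpace.inner_single_left, EuclideanSpace.inner_single_right, real_inner_comm]
  ring

lemma sum_coord (x : Ev n) : ∑ i, x i • (EuclideanSpace.single i (1:ℝ) : Ev n) = x := by
  ext j
  rw [WithLp.ofLp_sum, Finset.sum_apply]
  simp [PiLp.smul_apply, EuclideanSpace.single_apply]

lemma toCl_eq_sum (x : Ev n) : toCl n x = ∑ i, x i • eCl n i := by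
  conv_lhs => rw [toCl, ← sum_coord x]
  simp [eCl, toCl]

end Aux
section Aux2
open MvPolynomial

variable {n : ℕ}

/-- Evaluation of a multivariate polynomial as a function on `Ev n`. -/
def evalFn (n : ℕ) (p : MvPolynomial (Fin n) ℝ) : Ev n → ℝ :=
  fun x => MvPolynomial.eval (fun j => x j) p

lemma evalFn_hasFDerivAt (p : MvPolynomial (Fin n) ℝ) (x : Ev n) :
    HasFDerivAt (evalFn n p)
      (∑ j, evalFn n (pderiv j p) x • (EuclideanSpace.proj j : Ev n →L[ℝ] ℝ)) x := by
  induction p using MvPolynomial.induction_on with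
  | C a =>
      have e : evalFn n (C a) = fun _ : Ev n => a := funext fun y => by simp [evalFn]
      simp only [pderiv_C, evalFn, map_zero, zero_smul, Finset.sum_const_zero]
      rw [e]
      exact hasFDerivAt_const a x
  | add p q hp hq =>
      have h := hp.add hq
      have e1 : (evalFn n p + evalFn n q) = evalFn n (p + q) := by
        funext y; simp [evalFn]
      rw [e1] at h
      refine h.congr_fderiv (Eq.symm ?_)
      rw [← Finset.sum_add_distrib]
      congr 1; funext j
      simp [evalFn, add_smul]
  | mul_X p i hp =>
      have hXi : HasFDerivAt (fun y : Ev n => y i)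
          ((EuclideanSpace.proj i : Ev n →L[ℝ] ℝ)) x :=
        (EuclideanSpace.proj i : Ev n →L[ℝ] ℝ).hasFDerivAt
      have h := hp.mul hXi
      have e1 : (evalFn n p * fun y => y i) = evalFn n (p * X i) := by
        funext y; simp [evalFn]
      rw [e1] at h
      refine h.congr_fderiv (Eq.symm ?_)
      ext v
      simp only [ContinuousLinearMap.sum_apply, ContinuousLinearMap.smul_apply,
        ContinuousLinearMap.add_apply, PiLp.proj_apply, smul_eq_mul]
      have hthis : ∀ j, evalFn n (pderiv j (p * X i)) x
          = evalFn n (pderiv j p) x * x i + (if i = j then evalFn n p x else 0) := by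
        intro j
        by_cases hij : i = j
        · subst hij; simp [evalFn, pderiv_mul, pderiv_X_self]; ring
        · simp [evalFn, pderiv_mul, pderiv_X_of_ne (Ne.symm hij), hij]; ring
      simp only [hthis, add_mul, Finset.sum_add_distrib, ite_mul, zero_mul]
      rw [Finset.sum_ite_eq (Finset.univ : Finset (Fin n)) i (fun j => evalFn n p x * v j)]
      have e2 : ∑ j, evalFn n (pderiv j p) x * x i * v j
          = x i * ∑ j, evalFn n (pderiv j p) x * v j := by
        rw [Finset.mul_sum]; exact Finset.sum_congr rfl (fun j _ => by ring)
      simp only [Finset.mem_univ, if_true, e2]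
      ring

lemma evalFn_differentiable (p : MvPolynomial (Fin n) ℝ) :
    Differentiable ℝ (evalFn n p) := fun x => (evalFn_hasFDerivAt p x).differentiableAt

end Aux2
section Aux3
open MvPolynomial

variable {n : ℕ}

lemma isPolyMap_of_fintype {ι : Type} [Fintype ι] {P : Ev n → Cl n}
    (p : ι → MvPolynomial (Fin n) ℝ) (c : ι → Cl n)
    (h : ∀ x, P x = ∑ t, evalFn n (p t) x • c t) : IsPolyMap n P := by
  refine ⟨Fintype.card ι, p ∘ (Fintype.equivFin ι).symm, c ∘ (Fintype.equivFin ι).symm,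
    fun x => ?_⟩
  rw [h x]
  exact (Equiv.sum_comp (Fintype.equivFin ι).symm
    (fun t => evalFn n (p t) x • c t)).symm

lemma IsPolyMap.zero : IsPolyMap n (fun _ => (0 : Cl n)) :=
  ⟨0, Fin.elim0, Fin.elim0, fun x => by simp⟩

lemma IsPolyMap.const (c : Cl n) : IsPolyMap n (fun _ => c) :=
  ⟨1, fun _ => 1, fun _ => c, fun x => by simp [evalFn]⟩

lemma IsPolyMap.add {P Q : Ev n → Cl n} (hP : IsPolyMap n P) (hQ : IsPolyMap n Q) :
    IsPolyMap n (fun x => P x + Q x) := by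
  obtain ⟨N1, p1, c1, h1⟩ := hP
  obtain ⟨N2, p2, c2, h2⟩ := hQ
  refine isPolyMap_of_fintype (Sum.elim p1 p2) (Sum.elim c1 c2) (fun x => ?_)
  rw [Fintype.sum_sum_type]
  simp [h1 x, h2 x, evalFn]

lemma IsPolyMap.smul (r : ℝ) {P : Ev n → Cl n} (hP : IsPolyMap n P) :
    IsPolyMap n (fun x => r • P x) := by
  obtain ⟨N, p, c, h⟩ := hP
  exact ⟨N, p, fun i => r • c i, fun x => by
    show r • P x = _
    rw [h x, Finset.smul_sum]
    exact Finset.sum_congr rfl fun i _ => smul_comm r _ _⟩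

lemma IsPolyMap.constMul (e : Cl n) {P : Ev n → Cl n} (hP : IsPolyMap n P) :
    IsPolyMap n (fun x => e * P x) := by
  obtain ⟨N, p, c, h⟩ := hP
  exact ⟨N, p, fun i => e * c i, fun x => by
    show e * P x = _
    rw [h x, Finset.mul_sum]
    exact Finset.sum_congr rfl fun i _ => (mul_smul_comm _ _ _)⟩

lemma IsPolyMap.neg {P : Ev n → Cl n} (hP : IsPolyMap n P) :
    IsPolyMap n (fun x => -P x) := by
  have := hP.smul (-1)
  simpa using this

lemma IsPolyMap.sub {P Q : Ev n → Cl n} (hP : IsPolyMap n P) (hQ : IsPolyMap n Q) :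
    IsPolyMap n (fun x => P x - Q x) := by
  have := hP.add hQ.neg
  simpa [sub_eq_add_neg] using this

lemma IsPolyMap.mul {P Q : Ev n → Cl n} (hP : IsPolyMap n P) (hQ : IsPolyMap n Q) :
    IsPolyMap n (fun x => P x * Q x) := by
  obtain ⟨N1, p1, c1, h1⟩ := hP
  obtain ⟨N2, p2, c2, h2⟩ := hQ
  refine isPolyMap_of_fintype (fun t : Fin N1 × Fin N2 => p1 t.1 * p2 t.2)
    (fun t => c1 t.1 * c2 t.2) (fun x => ?_)
  rw [h1 x, h2 x, Finset.sum_mul_sum, Fintype.sum_prod_type]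
  refine Finset.sum_congr rfl fun a _ => Finset.sum_congr rfl fun b _ => ?_
  simp only [evalFn, map_mul, smul_mul_assoc, mul_smul_comm, smul_smul, mul_comm]

lemma IsPolyMap.finsum {ι : Type*} (s : Finset ι) (F : ι → Ev n → Cl n)
    (h : ∀ i ∈ s, IsPolyMap n (F i)) : IsPolyMap n (fun x => ∑ i ∈ s, F i x) := by
  classical
  induction s using Finset.induction_on with
  | empty => simpa using IsPolyMap.zero
  | insert a s' hnotmem ih =>
      simp only [Finset.sum_insert hnotmem]
      exact (h a (Finset.mem_insert_self a s')).add
        (ih fun i hi => h i (Finset.mem_insert_of_mem hi))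

lemma isPolyMap_toCl : IsPolyMap n (toCl n) :=
  ⟨n, fun i => X i, eCl n, fun x => by
    rw [toCl_eq_sum]
    exact Finset.sum_congr rfl fun i _ => by simp [evalFn]⟩

lemma isPolyMap_toCl_pow (s : ℕ) : IsPolyMap n (fun x => toCl n x ^ s) := by
  induction s with
  | zero => simpa using IsPolyMap.const (1 : Cl n)
  | succ s ih =>
      have := ih.mul isPolyMap_toCl
      simpa [pow_succ] using this

end Aux3
section Aux4
open MvPolynomial

variable {n : ℕ}

lemma hasFDerivAt_sum_eval {ι : Type} [Fintype ι] (p : ι → MvPolynomial (Fin n) ℝ)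
    (c : ι → Cl n) (x : Ev n) :
    HasFDerivAt (fun y => ∑ t, evalFn n (p t) y • c t)
      (∑ t, ((∑ j, evalFn n (pderiv j (p t)) x •
        (EuclideanSpace.proj j : Ev n →L[ℝ] ℝ)).smulRight (c t))) x :=
  HasFDerivAt.fun_sum fun t _ => (evalFn_hasFDerivAt (p t) x).smul_const (c t)

lemma pd_sum_eval {ι : Type} [Fintype ι] (p : ι → MvPolynomial (Fin n) ℝ)
    (c : ι → Cl n) (i : Fin n) (x : Ev n) :
    pd n i (fun y => ∑ t, evalFn n (p t) y • c t) x
      = ∑ t, evalFn n (pderiv i (p t)) x • c t := by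
  rw [pd, (hasFDerivAt_sum_eval p c x).fderiv]
  simp only [ContinuousLinearMap.coe_sum', Finset.sum_apply,
    ContinuousLinearMap.smulRight_apply, ContinuousLinearMap.sum_apply,
    ContinuousLinearMap.smul_apply, PiLp.proj_apply, EuclideanSpace.single_apply,
    smul_eq_mul, mul_ite, mul_one, mul_zero]
  refine Finset.sum_congr rfl fun t _ => ?_
  congr 1
  rw [Finset.sum_ite_eq' Finset.univ i (fun j => evalFn n (pderiv j (p t)) x)]
  simp

lemma IsPolyMap.differentiable {P : Ev n → Cl n} (hP : IsPolyMap n P) :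
    Differentiable ℝ P := by
  obtain ⟨N, p, c, h⟩ := hP
  have hPe : P = fun y => ∑ t, evalFn n (p t) y • c t := funext fun y => h y
  rw [hPe]
  exact fun x => (hasFDerivAt_sum_eval p c x).differentiableAt

lemma IsPolyMap.continuous {P : Ev n → Cl n} (hP : IsPolyMap n P) :
    Continuous P := hP.differentiable.continuous

lemma IsPolyMap.pd {P : Ev n → Cl n} (hP : IsPolyMap n P) (i : Fin n) :
    IsPolyMap n (pd n i P) := by
  obtain ⟨N, p, c, h⟩ := hP
  have hPe : P = fun y => ∑ t, evalFn n (p t) y • c t := funext fun y => h y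
  exact ⟨N, fun t => pderiv i (p t), c, fun x => by rw [hPe, pd_sum_eval]; rfl⟩

lemma pd_const (c : Cl n) (i : Fin n) (x : Ev n) : pd n i (fun _ => c) x = 0 := by
  simp [pd]

lemma pd_const_smul {f : Ev n → Cl n} (r : ℝ) (hf : DifferentiableAt ℝ f x) (i : Fin n) :
    pd n i (fun y => r • f y) x = r • pd n i f x := by
  rw [pd, fderiv_fun_const_smul hf, pd]; rfl

lemma pd_sub {f g : Ev n → Cl n} (hf : DifferentiableAt ℝ f x)
    (hg : DifferentiableAt ℝ g x) (i : Fin n) :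
    pd n i (fun y => f y - g y) x = pd n i f x - pd n i g x := by
  rw [pd, fderiv_fun_sub hf hg]; rfl

lemma pd_finsum {ι : Type*} {s : Finset ι} {F : ι → Ev n → Cl n} {x : Ev n}
    (hF : ∀ t ∈ s, DifferentiableAt ℝ (F t) x) (i : Fin n) :
    pd n i (fun y => ∑ t ∈ s, F t y) x = ∑ t ∈ s, pd n i (F t) x := by
  rw [pd, fderiv_fun_sum hF]
  simp [pd]

lemma dirac_const (c : Cl n) (x : Ev n) : Dirac n (fun _ => c) x = 0 := by
  simp [Dirac, pd_const]

lemma dirac_smul {f : Ev n → Cl n} (r : ℝ) (hf : DifferentiableAt ℝ f x) :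
    Dirac n (fun y => r • f y) x = r • Dirac n f x := by
  simp [Dirac, pd_const_smul r hf, mul_smul_comm, Finset.smul_sum]

lemma dirac_sub {f g : Ev n → Cl n} (hf : DifferentiableAt ℝ f x)
    (hg : DifferentiableAt ℝ g x) :
    Dirac n (fun y => f y - g y) x = Dirac n f x - Dirac n g x := by
  simp [Dirac, pd_sub hf hg, mul_sub, Finset.sum_sub_distrib]

lemma dirac_finsum {ι : Type*} {s : Finset ι} {F : ι → Ev n → Cl n} {x : Ev n}
    (hF : ∀ t ∈ s, DifferentiableAt ℝ (F t) x) :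
    Dirac n (fun y => ∑ t ∈ s, F t y) x = ∑ t ∈ s, Dirac n (F t) x := by
  simp only [Dirac, pd_finsum hF, Finset.mul_sum]
  rw [Finset.sum_comm]

lemma IsPolyMap.dirac {P : Ev n → Cl n} (hP : IsPolyMap n P) :
    IsPolyMap n (Dirac n P) := by
  have : Dirac n P = fun x => ∑ i : Fin n, eCl n i * _root_.pd n i P x := rfl
  rw [this]
  exact IsPolyMap.finsum Finset.univ _
    (fun i _ => (hP.pd i).constMul (eCl n i))

lemma pd_toCl (i : Fin n) (x : Ev n) : pd n i (toCl n) x = eCl n i := by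
  have h : toCl n = fun y => ∑ t : Fin n, evalFn n (X t) y • eCl n t := by
    funext y
    rw [toCl_eq_sum]
    exact Finset.sum_congr rfl fun t _ => by simp [evalFn]
  rw [h, pd_sum_eval]
  classical
  have : ∀ t : Fin n, evalFn n (pderiv i (X t)) x = if t = i then 1 else 0 := by
    intro t
    by_cases hti : t = i
    · subst hti; simp [evalFn, pderiv_X_self]
    · simp [evalFn, pderiv_X_of_ne hti, hti]
  simp only [this, ite_smul, one_smul, zero_smul]
  rw [Finset.sum_ite_eq' Finset.univ i (fun t => eCl n t)]
  simp

lemma pd_mul_poly {P Q : Ev n → Cl n} (hP : IsPolyMap n P) (hQ : IsPolyMap n Q)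
    (i : Fin n) (x : Ev n) :
    pd n i (fun y => P y * Q y) x = pd n i P x * Q x + P x * pd n i Q x := by
  obtain ⟨N1, p1, c1, h1⟩ := hP
  obtain ⟨N2, p2, c2, h2⟩ := hQ
  have hPe : P = fun y => ∑ a : Fin N1, evalFn n (p1 a) y • c1 a := funext fun y => h1 y
  have hQe : Q = fun y => ∑ b : Fin N2, evalFn n (p2 b) y • c2 b := funext fun y => h2 y
  subst hPe hQe
  have hprod : (fun y => (∑ a : Fin N1, evalFn n (p1 a) y • c1 a)
      * (∑ b : Fin N2, evalFn n (p2 b) y • c2 b))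
      = fun y => ∑ t : Fin N1 × Fin N2, evalFn n (p1 t.1 * p2 t.2) y • (c1 t.1 * c2 t.2) := by
    funext y
    rw [Finset.sum_mul_sum, Fintype.sum_prod_type]
    exact Finset.sum_congr rfl fun a _ => Finset.sum_congr rfl fun b _ => by
      simp only [evalFn, map_mul, smul_mul_assoc, mul_smul_comm, smul_smul, mul_comm]
  rw [hprod, pd_sum_eval, pd_sum_eval, pd_sum_eval]
  rw [Finset.sum_mul_sum, Finset.sum_mul_sum, ← Finset.sum_add_distrib]
  rw [Fintype.sum_prod_type]
  refine Finset.sum_congr rfl fun a _ => ?_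
  rw [← Finset.sum_add_distrib]
  refine Finset.sum_congr rfl fun b _ => ?_
  simp only [pderiv_mul, evalFn, map_add, map_mul, add_smul]
  congr 1
  · simp only [smul_mul_assoc, mul_smul_comm, smul_smul, mul_comm]
  · simp only [smul_mul_assoc, mul_smul_comm, smul_smul, mul_comm]

end Aux4
section Aux5
open MvPolynomial

variable {n : ℕ}

lemma toCl_smul (c : ℝ) (x : Ev n) : toCl n (c • x) = c • toCl n x := by
  simp [toCl]

lemma euler {H : Ev n → Cl n} {x : Ev n} (hH : DifferentiableAt ℝ H x) (d : ℕ)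
    (hhom : ∀ (c : ℝ) (y : Ev n), H (c • y) = c ^ d • H y) :
    ∑ i, x i • pd n i H x = (d : ℝ) • H x := by
  have h1 : HasDerivAt (fun c : ℝ => c • x) x 1 := by
    simpa using (hasDerivAt_id (1 : ℝ)).smul_const x
  have hH1 : HasFDerivAt H (fderiv ℝ H x) ((fun c : ℝ => c • x) 1) := by
    simpa using hH.hasFDerivAt
  have h2 : HasDerivAt (fun c : ℝ => H (c • x)) (fderiv ℝ H x x) 1 := by
    exact hH1.comp_hasDerivAt 1 h1
  have h3 : (fun c : ℝ => H (c • x)) = fun c : ℝ => c ^ d • H x := funext fun c => hhom c x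
  rw [h3] at h2
  have h4 : HasDerivAt (fun c : ℝ => c ^ d • H x) ((d : ℝ) • H x) 1 := by
    simpa using (hasDerivAt_pow d (1 : ℝ)).smul_const (H x)
  have h5 : fderiv ℝ H x x = (d : ℝ) • H x := h2.unique h4
  simp only [pd]
  have h6 : ∑ i, x i • (fderiv ℝ H x) (EuclideanSpace.single i (1 : ℝ))
      = fderiv ℝ H x (∑ i, x i • (EuclideanSpace.single i (1 : ℝ) : Ev n)) := by
    rw [map_sum]
    exact Finset.sum_congr rfl fun i _ => (map_smul _ _ _).symm
  rw [h6, sum_coord, h5]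

lemma star_identity {H : Ev n → Cl n} (hH : IsPolyMap n H) (d : ℕ)
    (hhom : ∀ (c : ℝ) (y : Ev n), H (c • y) = c ^ d • H y) (x : Ev n) :
    Dirac n (fun y => toCl n y * H y) x
      = (-((n : ℝ) + 2 * d)) • H x - toCl n x * Dirac n H x := by
  have hdiff := hH.differentiable
  have hDir : Dirac n (fun y => toCl n y * H y) x
      = ∑ i, eCl n i * (eCl n i * H x + toCl n x * pd n i H x) := by
    refine Finset.sum_congr rfl fun i _ => ?_
    rw [pd_mul_poly isPolyMap_toCl hH i x, pd_toCl]
  rw [hDir]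
  have hsplit : ∀ i : Fin n, eCl n i * (eCl n i * H x + toCl n x * pd n i H x)
      = (-1 : ℝ) • H x + ((-(2 * x i)) • pd n i H x - toCl n x * (eCl n i * pd n i H x)) := by
    intro i
    rw [mul_add, ← mul_assoc, eCl_sq, ← Algebra.smul_def]
    congr 1
    rw [← mul_assoc]
    have hcm : eCl n i * toCl n x = algebraMap ℝ (Cl n) (-(2 * x i)) - toCl n x * eCl n i :=
      eq_sub_of_add_eq (eCl_mul_toCl_add i x)
    rw [hcm, sub_mul, ← Algebra.smul_def, mul_assoc]
  rw [Finset.sum_congr rfl fun i _ => hsplit i]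
  rw [Finset.sum_add_distrib, Finset.sum_sub_distrib, Finset.sum_const]
  rw [← Finset.mul_sum]
  have hsum2 : ∑ i : Fin n, (-(2 * x i)) • pd n i H x
      = (-2 : ℝ) • ((d : ℝ) • H x) := by
    rw [← euler (hdiff x) d hhom, Finset.smul_sum]
    exact Finset.sum_congr rfl fun i _ => by rw [smul_smul]; congr 1; ring
  rw [hsum2]
  have : Dirac n H x = ∑ i, eCl n i * pd n i H x := rfl
  rw [← this]
  have hcard : (Finset.univ : Finset (Fin n)).card = n := by simp
  rw [hcard]
  rw [show (n : ℕ) • ((-1 : ℝ) • H x) = ((n : ℝ) * (-1)) • H x by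
    rw [← Nat.cast_smul_eq_nsmul ℝ n ((-1 : ℝ) • H x), smul_smul]]
  rw [smul_smul]
  rw [← add_sub_assoc, ← add_smul]
  congr 2
  ring

end Aux5
section Aux6
open MvPolynomial

/-- The constant `c` in `D(x^s f) = c • x^{s-1} f` for `f` monogenic homogeneous of degree `m`. -/
def cst (n s m : ℕ) : ℝ := if Even s then -(s : ℝ) else -((n : ℝ) + 2 * m + s - 1)

variable {n : ℕ}

lemma cst_one (m : ℕ) : cst n 1 m = -((n : ℝ) + 2 * m) := by
  simp [cst, Nat.not_even_one]

lemma cst_rec (s m : ℕ) :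
    -((n : ℝ) + 2 * ((m + s + 1 : ℕ) : ℝ)) - cst n (s + 1) m = cst n (s + 2) m := by
  by_cases hs : Even s
  · have h1 : ¬ Even (s + 1) := by simpa [Nat.even_add_one] using hs
    have h2 : Even (s + 2) := by
      simpa [Nat.even_add_one] using h1
    simp only [cst, h1, h2, if_true, if_false]
    push_cast
    ring
  · have h1 : Even (s + 1) := by simpa [Nat.even_add_one] using hs
    have h2 : ¬ Even (s + 2) := by simpa [Nat.even_add_one] using h1
    simp only [cst, h1, h2, if_true, if_false]
    push_cast
    ring

lemma cst_ne_zero (hn : 2 ≤ n) (s m : ℕ) : cst n (s + 1) m ≠ 0 := by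
  by_cases hs : Even (s + 1)
  · have : s + 1 ≠ 0 := Nat.succ_ne_zero s
    simp only [cst, hs, if_true]
    intro h
    have : ((s : ℝ) + 1) = 0 := by push_cast at h ⊢; linarith
    have := this
    nlinarith [Nat.cast_nonneg (α := ℝ) s]
  · simp only [cst, hs, if_false]
    intro h
    have hn' : (2 : ℝ) ≤ (n : ℝ) := by exact_mod_cast hn
    have hm : (0 : ℝ) ≤ (m : ℝ) := Nat.cast_nonneg m
    have hsr : (0 : ℝ) ≤ (s : ℝ) := Nat.cast_nonneg s
    push_cast at h
    nlinarith

lemma key_identity (hn : 2 ≤ n) {f : Ev n → Cl n} (hf : IsPolyMap n f)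
    (hmono : ∀ x, Dirac n f x = 0) (m : ℕ)
    (hhom : ∀ (c : ℝ) (y : Ev n), f (c • y) = c ^ m • f y) :
    ∀ (s : ℕ) (x : Ev n), Dirac n (fun y => toCl n y ^ (s + 1) * f y) x
      = cst n (s + 1) m • (toCl n x ^ s * f x) := by
  intro s
  induction s with
  | zero =>
      intro x
      have e : (fun y => toCl n y ^ (0 + 1) * f y) = fun y => toCl n y * f y := by
        funext y; rw [pow_one]
      rw [e, star_identity hf m hhom x, hmono x, mul_zero, sub_zero, pow_zero, one_mul,
        cst_one]
  | succ s ih =>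
      intro x
      set G : Ev n → Cl n := fun y => toCl n y ^ (s + 1) * f y with hG
      have hGpoly : IsPolyMap n G := (isPolyMap_toCl_pow (s + 1)).mul hf
      have hGhom : ∀ (c : ℝ) (y : Ev n), G (c • y) = c ^ (m + s + 1) • G y := by
        intro c y
        show toCl n (c • y) ^ (s + 1) * f (c • y) = c ^ (m + s + 1) • (toCl n y ^ (s + 1) * f y)
        rw [toCl_smul, smul_pow, hhom, smul_mul_assoc, mul_smul_comm, smul_smul,
          ← pow_add]
        congr 2
        omega
      have e : (fun y => toCl n y ^ (s + 1 + 1) * f y) = fun y => toCl n y * G y := by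
        funext y
        rw [hG, ← mul_assoc, ← pow_succ']
      rw [e, star_identity hGpoly (m + s + 1) hGhom x, ih x]
      have e2 : toCl n x * (cst n (s + 1) m • (toCl n x ^ s * f x))
          = cst n (s + 1) m • G x := by
        rw [mul_smul_comm, hG, ← mul_assoc, ← pow_succ']
      rw [e2, ← sub_smul, cst_rec]

end Aux6
section Aux7

variable {n : ℕ}

lemma dirac_homog {p : Ev n → Cl n} (hp : IsPolyMap n p) {q : ℕ} (hq : 1 ≤ q)
    (hhom : ∀ (c : ℝ) (x : Ev n), p (c • x) = c ^ q • p x) :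
    ∀ (c : ℝ) (x : Ev n), Dirac n p (c • x) = c ^ (q - 1) • Dirac n p x := by
  have hdiff := hp.differentiable
  have hne : ∀ (c : ℝ), c ≠ 0 → ∀ x, Dirac n p (c • x) = c ^ (q - 1) • Dirac n p x := by
    intro c hc x
    have hpd : ∀ i, pd n i p (c • x) = c ^ (q - 1) • pd n i p x := by
      intro i
      set A : Ev n →L[ℝ] Ev n := c • ContinuousLinearMap.id ℝ (Ev n) with hA
      have hAy : ∀ y, A y = c • y := fun y => rfl
      have hcomp : (fun y => p (A y)) = fun y => c ^ q • p y := by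
        funext y; rw [hAy, hhom c y]
      have hd1 : HasFDerivAt (fun y => p (A y)) ((fderiv ℝ p (c • x)).comp A) x := by
        exact HasFDerivAt.comp x (by simpa [hAy] using (hdiff (c • x)).hasFDerivAt)
          A.hasFDerivAt
      have hd2 : HasFDerivAt (fun y => c ^ q • p y) (c ^ q • fderiv ℝ p x) x :=
        (hdiff x).hasFDerivAt.const_smul (c ^ q)
      rw [hcomp] at hd1
      have huniq := hd1.unique hd2
      have happ := congrArg
        (fun (L : Ev n →L[ℝ] Cl n) => L (EuclideanSpace.single i 1)) huniq
      simp only [ContinuousLinearMap.coe_comp', Function.comp_apply,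
        ContinuousLinearMap.smul_apply] at happ
      have happ' : c • pd n i p (c • x) = c ^ q • pd n i p x := by
        rw [pd, pd]
        rw [show A (EuclideanSpace.single i 1) = c • (EuclideanSpace.single i 1 : Ev n)
          from rfl] at happ
        rw [← _root_.map_smul]
        exact happ
      have hqsub : q - 1 + 1 = q := Nat.succ_pred_eq_of_pos hq
      calc pd n i p (c • x) = c⁻¹ • (c • pd n i p (c • x)) := by
            rw [smul_smul, inv_mul_cancel₀ hc, one_smul]
        _ = c⁻¹ • (c ^ q • pd n i p x) := by rw [happ']
        _ = c ^ (q - 1) • pd n i p x := by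
            rw [smul_smul]
            congr 1
            rw [← hqsub, pow_succ]
            field_simp
            simp
    show ∑ i, eCl n i * pd n i p (c • x) = c ^ (q - 1) • ∑ i, eCl n i * pd n i p x
    rw [Finset.smul_sum]
    exact Finset.sum_congr rfl fun i _ => by rw [hpd i, mul_smul_comm]
  intro c x
  rcases eq_or_ne c 0 with h0 | h0
  · have hcontF : Continuous (fun t : ℝ => Dirac n p (t • x)) :=
      (hp.dirac).continuous.comp (continuous_id.smul continuous_const)
    have hcontG : Continuous (fun t : ℝ => t ^ (q - 1) • Dirac n p x) :=
      (continuous_pow _).smul continuous_const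
    have heq : Set.EqOn (fun t : ℝ => Dirac n p (t • x))
        (fun t => t ^ (q - 1) • Dirac n p x) {(0 : ℝ)}ᶜ := fun t ht => hne t ht x
    have hext := Continuous.ext_on (dense_compl_singleton (0 : ℝ)) hcontF hcontG heq
    exact congrFun hext c
  · exact hne c h0 x

end Aux7
section Main

lemma main_aux (n : ℕ) (hn : 2 ≤ n) :
    ∀ (k : ℕ), 1 ≤ k → ∀ (q : ℕ) (p : Ev n → Cl n), IsPolyMap n p →
      (∀ (c : ℝ) (x : Ev n), p (c • x) = c ^ q • p x) →
      (∀ x, (Dirac n)^[k] p x = 0) →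
      ∃ f : Fin k → (Ev n → Cl n),
        (∀ j, IsPolyMap n (f j)) ∧
        (∀ j, ∀ x, Dirac n (f j) x = 0) ∧
        (∀ j : Fin k, (j : ℕ) ≤ q →
          ∀ (c : ℝ) (x : Ev n), f j (c • x) = c ^ (q - (j : ℕ)) • f j x) ∧
        (∀ j : Fin k, q < (j : ℕ) → f j = 0) ∧
        (∀ x, p x = ∑ j : Fin k, (toCl n x) ^ (j : ℕ) * f j x) := by
  intro k
  induction k with
  | zero => intro h; exact absurd h (by omega)
  | succ k ih =>
    intro _ q p hpoly hhom hkm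
    by_cases hk0 : k = 0
    · subst hk0
      refine ⟨fun _ => p, fun _ => hpoly, ?_, ?_, ?_, ?_⟩
      · intro j x
        have := hkm x
        rwa [Function.iterate_one] at this
      · intro j _ c x
        have hj0 : (j : ℕ) = 0 := by omega
        rw [hj0]
        simpa using hhom c x
      · intro j hj
        have : (j : ℕ) < 1 := j.isLt
        omega
      · intro x
        simp
    · have hk1 : 1 ≤ k := by omega
      by_cases hq0 : q = 0
      · subst hq0
        have hconst : ∀ x, p x = p 0 := by
          intro x
          have h := hhom 0 x
          rw [zero_smul] at h
          simpa using h.symm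
        have hpconst : p = fun _ => p 0 := funext hconst
        refine ⟨fun j => if j = 0 then p else 0, ?_, ?_, ?_, ?_, ?_⟩
        · intro j
          by_cases hj : j = 0
          · simpa [hj] using hpoly
          · simp only [hj, ↓reduceIte]; exact IsPolyMap.zero
        · intro j x
          by_cases hj : j = 0
          · simp only [hj, if_true]
            rw [hpconst]
            exact dirac_const _ x
          · simp only [hj, if_false]
            exact dirac_const 0 x
        · intro j hj c x
          have hj0 : j = 0 := by
            apply Fin.ext
            simp only [Fin.val_zero]
            omega
          simp only [hj0, if_true]
          rw [hconst (c • x), ← hconst x]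
          simp
        · intro j hj
          have : j ≠ 0 := by
            intro hj0
            rw [hj0] at hj
            simp at hj
          simp [this]
        · intro x
          rw [Fin.sum_univ_succ]
          simp [Fin.succ_ne_zero, hconst x]
      · have hq1 : 1 ≤ q := by omega
        have hgpoly : IsPolyMap n (Dirac n p) := hpoly.dirac
        have hghom : ∀ (c : ℝ) (x : Ev n),
            Dirac n p (c • x) = c ^ (q - 1) • Dirac n p x :=
          dirac_homog hpoly hq1 hhom
        have hgkm : ∀ x, (Dirac n)^[k] (Dirac n p) x = 0 := by
          intro x
          have := hkm x
          rwa [Function.iterate_succ_apply] at this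
        obtain ⟨h, Hpoly, Hmono, Hhom, Hzero, Hsum⟩ :=
          ih hk1 (q - 1) (Dirac n p) hgpoly hghom hgkm
        set α : Fin k → ℝ := fun j => (cst n ((j : ℕ) + 1) (q - 1 - (j : ℕ)))⁻¹ with hα
        set h' : Fin k → Ev n → Cl n := fun j x => α j • h j x with hh'
        have hh'poly : ∀ j, IsPolyMap n (h' j) := fun j => (Hpoly j).smul (α j)
        have hh'mono : ∀ j x, Dirac n (h' j) x = 0 := by
          intro j x
          have := dirac_smul (α j) ((Hpoly j).differentiable x)
          rw [hh']
          rw [this, Hmono j x, smul_zero]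
        have hh'hom : ∀ j : Fin k, (j : ℕ) ≤ q - 1 →
            ∀ (c : ℝ) (x : Ev n), h' j (c • x) = c ^ (q - 1 - (j : ℕ)) • h' j x := by
          intro j hj c x
          rw [hh']
          show α j • h j (c • x) = c ^ (q - 1 - (j : ℕ)) • (α j • h j x)
          rw [Hhom j hj c x, smul_comm]
        have hh'zero : ∀ j : Fin k, q - 1 < (j : ℕ) → h' j = 0 := by
          intro j hj
          rw [hh']
          funext x
          show α j • h j x = 0
          rw [Hzero j hj]
          simp
        set F : Fin k → Ev n → Cl n := fun j x => toCl n x ^ ((j : ℕ) + 1) * h' j x with hF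
        have hFpoly : ∀ j, IsPolyMap n (F j) := fun j =>
          (isPolyMap_toCl_pow _).mul (hh'poly j)
        set f0 : Ev n → Cl n := fun x => p x - ∑ j : Fin k, F j x with hf0
        have hDF : ∀ (j : Fin k) (x : Ev n),
            Dirac n (F j) x = toCl n x ^ (j : ℕ) * h j x := by
          intro j x
          by_cases hjq : (j : ℕ) ≤ q - 1
          · have hkey := key_identity hn (hh'poly j) (hh'mono j) (q - 1 - (j : ℕ))
              (hh'hom j hjq) (j : ℕ) x
            have hFj : F j = fun y => toCl n y ^ ((j : ℕ) + 1) * h' j y := rfl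
            rw [hFj, hkey]
            have : h' j x = α j • h j x := rfl
            rw [this, mul_smul_comm, smul_smul, hα, mul_inv_cancel₀ (cst_ne_zero hn _ _),
              one_smul]
          · have hzj : h j = 0 := Hzero j (by omega)
            have hFj : F j = fun _ => 0 := by
              funext y
              show toCl n y ^ ((j : ℕ) + 1) * h' j y = 0
              have : h' j y = α j • h j y := rfl
              rw [this, hzj]
              simp
            rw [hFj, hzj]
            simp [dirac_const]
        have hSumDiff : ∀ x, DifferentiableAt ℝ (fun y => ∑ j : Fin k, F j y) x :=
          fun x => DifferentiableAt.fun_sum fun j _ => (hFpoly j).differentiable x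
        have hf0dirac : ∀ x, Dirac n f0 x = 0 := by
          intro x
          have h1 : Dirac n f0 x
              = Dirac n p x - Dirac n (fun y => ∑ j : Fin k, F j y) x :=
            dirac_sub (hpoly.differentiable x) (hSumDiff x)
          rw [h1, dirac_finsum (fun j _ => (hFpoly j).differentiable x)]
          have h2 : ∑ j : Fin k, Dirac n (F j) x
              = ∑ j : Fin k, toCl n x ^ (j : ℕ) * h j x :=
            Finset.sum_congr rfl fun j _ => hDF j x
          rw [h2, ← Hsum x, sub_self]
        have hf0poly : IsPolyMap n f0 :=
          hpoly.sub (IsPolyMap.finsum Finset.univ F fun j _ => hFpoly j)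
        have hf0hom : ∀ (c : ℝ) (x : Ev n), f0 (c • x) = c ^ q • f0 x := by
          intro c x
          show p (c • x) - ∑ j : Fin k, F j (c • x) = c ^ q • (p x - ∑ j : Fin k, F j x)
          rw [hhom c x, smul_sub, Finset.smul_sum]
          congr 1
          refine Finset.sum_congr rfl fun j _ => ?_
          by_cases hjq : (j : ℕ) ≤ q - 1
          · show toCl n (c • x) ^ ((j : ℕ) + 1) * h' j (c • x)
              = c ^ q • (toCl n x ^ ((j : ℕ) + 1) * h' j x)
            rw [toCl_smul, smul_pow, hh'hom j hjq c x, smul_mul_assoc, mul_smul_comm,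
              smul_smul, ← pow_add]
            congr 2
            omega
          · have hzj : h' j = 0 := hh'zero j (by omega)
            show toCl n (c • x) ^ ((j : ℕ) + 1) * h' j (c • x)
              = c ^ q • (toCl n x ^ ((j : ℕ) + 1) * h' j x)
            rw [hzj]
            simp
        refine ⟨Fin.cases f0 h', ?_, ?_, ?_, ?_, ?_⟩
        · intro j
          induction j using Fin.cases with
          | zero => simpa using hf0poly
          | succ j' => simpa using hh'poly j'
        · intro j x
          induction j using Fin.cases with
          | zero => simpa using hf0dirac x
          | succ j' => simpa using hh'mono j' x
        · intro j hj c x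
          induction j using Fin.cases with
          | zero => simpa using hf0hom c x
          | succ j' =>
              simp only [Fin.cases_succ]
              have hj' : (j' : ℕ) + 1 ≤ q := by
                simpa [Fin.val_succ] using hj
              have hle : (j' : ℕ) ≤ q - 1 := by omega
              have := hh'hom j' hle c x
              rw [this]
              have hexp : q - 1 - (j' : ℕ) = q - ((j'.succ : Fin (k+1)) : ℕ) := by
                simp only [Fin.val_succ]
                omega
              rw [hexp]
        · intro j hj
          induction j using Fin.cases with
          | zero =>
              simp only [Fin.val_zero] at hj
              omega
          | succ j' =>
              simp only [Fin.cases_succ]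
              apply hh'zero
              simp only [Fin.val_succ] at hj
              omega
        · intro x
          rw [Fin.sum_univ_succ]
          simp only [Fin.cases_zero, Fin.cases_succ, Fin.val_zero, Fin.val_succ,
            pow_zero, one_mul]
          have : ∑ j : Fin k, toCl n x ^ ((j : ℕ) + 1) * h' j x = ∑ j : Fin k, F j x :=
            Finset.sum_congr rfl fun j _ => rfl
          rw [this]
          show p x = (p x - ∑ j : Fin k, F j x) + ∑ j : Fin k, F j x
          abel

end Main
/-- **Decomposition of homogeneous `k`-monogenic polynomials**:
`p(x) = f₀(x) + x f₁(x) + ⋯ + x^{k-1} f_{k-1}(x)`. -/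
theorem k_monogenic_poly_decomposition (n : ℕ) (hn : 2 ≤ n) (k : ℕ) (hk : 1 ≤ k) (q : ℕ)
    (p : Ev n → Cl n) (hpoly : IsPolyMap n p)
    (hhom : ∀ (c : ℝ) (x : Ev n), p (c • x) = c ^ q • p x)
    (hkm : ∀ x, (Dirac n)^[k] p x = 0) :
    ∃ f : Fin k → (Ev n → Cl n),
      (∀ j, IsPolyMap n (f j)) ∧
      (∀ j, ∀ x, Dirac n (f j) x = 0) ∧
      (∀ j : Fin k, (j : ℕ) ≤ q →
        ∀ (c : ℝ) (x : Ev n), f j (c • x) = c ^ (q - (j : ℕ)) • f j x) ∧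
      (∀ j : Fin k, q < (j : ℕ) → f j = 0) ∧
      (∀ x, p x = ∑ j : Fin k, (toCl n x) ^ (j : ℕ) * f j x) := by
  exact main_aux n hn k hk q p hpoly hhom hkm


end
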